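/- arXiv:math/9805106 — 3 statements merged into one kernel-verified Lean document; each statement's English description precedes it below -/
import Mathlib

section
/- Let P be a polynomial with integer coefficients of degree at most r-1 (r > 2), with the sum of absolute values of its coefficients equal to D. Suppose P(e^{2πi/r}) is a nonzero real number. Then for every prime p > D^{φ(r)/2} with p not dividing r, and every primitive r-th root of unity ζ in an algebraic closure of F_p, one has P(ζ) ≠ 0. -/
/-!
Put `μ = e^{2πi/r}` and `K = ℚ(μ)`, a CM field since `r > 2`. The algebraic integer
`x = P(μ)` is real, hence lies in the maximal real subfield `K⁺`, over which `K` is quadratic; so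
`N_{K/ℚ}(x) = N_{K⁺/ℚ}(x)²` is the square of an integer `m`, and `m ≠ 0` because `x ≠ 0`.
Since `𝓞 K = ℤ[μ]`, the assignment `μ ↦ ζ` defines a ring map `𝓞 K → F̄_p` killing `x`, and
`x` divides its norm, so `p ∣ m²`, i.e. `p ∣ m`. On the other hand every conjugate of `x` is
`P` evaluated at a root of unity, of absolute value at most `D`, so `m² ≤ D^{φ(r)}` and
`p ≤ |m| ≤ D^{φ(r)/2}`.
-/

open Polynomial Complex NumberField IntermediateField

theorem Polynomial.norm_aeval_le_sum_natAbs_coeff (P : ℤ[X]) {z : ℂ} (hz : ‖z‖ ≤ 1) :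
    ‖aeval z P‖ ≤ ∑ i ∈ P.support, ((P.coeff i).natAbs : ℝ) := by
  rw [aeval_def, eval₂_eq_sum, Polynomial.sum_def]
  refine (norm_sum_le _ _).trans (Finset.sum_le_sum fun i _ => ?_)
  rw [norm_mul, norm_pow, algebraMap_int_eq, eq_intCast, Complex.norm_intCast, Nat.cast_natAbs,
    Int.cast_abs]
  exact mul_le_of_le_one_right (abs_nonneg _) (pow_le_one₀ (norm_nonneg z) hz)

theorem Int.natCast_le_rpow_half_of_dvd {p : ℕ} {m : ℤ} (hm : m ≠ 0) (hpm : (p : ℤ) ∣ m)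
    {b : ℝ} (hb : 0 ≤ b) {n : ℕ} (hmb : (m : ℝ) ^ 2 ≤ b ^ n) : (p : ℝ) ≤ b ^ ((n : ℝ) / 2) :=
  calc (p : ℝ) ≤ |(m : ℝ)| := by
        exact_mod_cast Int.le_of_dvd (abs_pos.mpr hm) ((dvd_abs _ _).mpr hpm)
    _ ≤ b ^ ((n : ℝ) / 2) := by
        refine abs_le_of_sq_le_sq ?_ (by positivity)
        rwa [← Real.rpow_mul_natCast hb, Nat.cast_two, div_mul_cancel₀ _ two_ne_zero,
          Real.rpow_natCast]

theorem IsPrimitiveRoot.isCyclotomicExtension_intermediateField_adjoin {F L : Type*} [Field F]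
    [Field L] [Algebra F L] {n : ℕ} [NeZero n] {ζ : L} (hζ : IsPrimitiveRoot ζ n) :
    IsCyclotomicExtension {n} F F⟮ζ⟯ := by
  change IsCyclotomicExtension {n} F F⟮ζ⟯.toSubalgebra
  rw [adjoin_simple_toSubalgebra_of_isAlgebraic
    (hζ.isIntegral (NeZero.pos n)).tower_top.isAlgebraic]
  exact hζ.adjoin_isCyclotomicExtension F

theorem IsPrimitiveRoot.exists_algHom_ringOfIntegers {K : Type*} [Field K] [CharZero K] {n : ℕ}
    [NeZero n] [IsCyclotomicExtension {n} ℚ K] {ζ : K} (hζ : IsPrimitiveRoot ζ n) {F : Type*}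
    [CommRing F] {η : F} (hη : (cyclotomic n F).IsRoot η) :
    ∃ ψ : 𝓞 K →ₐ[ℤ] F, ψ hζ.toInteger = η := by
  have hmin : minpoly ℤ hζ.integralPowerBasis.gen = cyclotomic n ℤ := by
    rw [integralPowerBasis_gen, ← minpoly.algHom_eq (Algebra.algHom ℤ (𝓞 K) K)
      RingOfIntegers.coe_injective, cyclotomic_eq_minpoly hζ (NeZero.pos n)]
    rfl
  have hroot : aeval η (minpoly ℤ hζ.integralPowerBasis.gen) = 0 := by
    rwa [hmin, aeval_def, eval₂_eq_eval_map, map_cyclotomic]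
  exact ⟨hζ.integralPowerBasis.lift η hroot,
    integralPowerBasis_gen hζ ▸ hζ.integralPowerBasis.lift_gen η hroot⟩

namespace NumberField

theorem RingOfIntegers.natCast_dvd_norm_of_map_eq_zero {K : Type*} [Field K] [NumberField K]
    {F : Type*} [CommRing F] (p : ℕ) [CharP F p] (ψ : 𝓞 K →+* F) {x : 𝓞 K} (hx : ψ x = 0) :
    (p : ℤ) ∣ Algebra.norm ℤ x := by
  obtain ⟨y, hy⟩ := Algebra.dvd_algebraMap_intNorm_self ℤ (𝓞 K) x
  rw [Algebra.intNorm_eq_norm] at hy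
  have := congrArg ψ hy
  rwa [map_mul, hx, zero_mul, algebraMap_int_eq, eq_intCast, map_intCast,
    CharP.intCast_eq_zero_iff F p] at this

theorem RingOfIntegers.abs_norm_aeval_le_of_pow_eq_one {K : Type*} [Field K] [NumberField K]
    {ζ : 𝓞 K} {r : ℕ} (hζ : ζ ^ r = 1) (hr : r ≠ 0) (P : ℤ[X]) :
    |(Algebra.norm ℤ (aeval ζ P) : ℝ)| ≤
      (∑ i ∈ P.support, ((P.coeff i).natAbs : ℝ)) ^ Module.finrank ℚ K := by
  set z : K := aeval (ζ : K) P
  have hz : ((aeval ζ P : 𝓞 K) : K) = z := (aeval_algebraMap_apply K ζ P).symm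
  have hσ (σ : K →ₐ[ℚ] ℂ) : ‖σ z‖ ≤ ∑ i ∈ P.support, ((P.coeff i).natAbs : ℝ) := by
    rw [← AlgHom.coe_restrictScalars' ℤ σ, ← aeval_algHom_apply]
    refine P.norm_aeval_le_sum_natAbs_coeff (Complex.norm_eq_one_of_pow_eq_one ?_ hr).le
    rw [← map_pow, ← map_pow, hζ, map_one, map_one]
  calc |(Algebra.norm ℤ (aeval ζ P) : ℝ)| = ‖algebraMap ℚ ℂ (Algebra.norm ℚ z)‖ := by
        rw [eq_ratCast, Complex.norm_ratCast, ← hz, ← Algebra.coe_norm_int, Rat.cast_intCast]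
    _ = ∏ σ : K →ₐ[ℚ] ℂ, ‖σ z‖ := by
        rw [Algebra.norm_eq_prod_embeddings, norm_prod]
    _ ≤ _ := by
        rw [← AlgHom.card ℚ K ℂ, ← Finset.card_univ, ← Finset.prod_const]
        exact Finset.prod_le_prod (fun _ _ => norm_nonneg _) fun σ _ => hσ σ

namespace IsCMField

theorem complexConj_eq_self_of_im_eq_zero {K : Type*} [Field K] [CharZero K] [IsCMField K]
    [Algebra.IsIntegral ℚ K] (φ : K →+* ℂ) {x : K} (hx : (φ x).im = 0) :
    complexConj K x = x :=
  φ.injective <| (complexEmbedding_complexConj K φ x).trans (Complex.conj_eq_iff_im.mpr hx)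

theorem exists_norm_eq_sq {K : Type*} [Field K] [NumberField K] [IsCMField K] {x : 𝓞 K}
    (hx : complexConj K x = x) : ∃ m : ℤ, Algebra.norm ℤ x = m ^ 2 := by
  obtain ⟨y, hy⟩ := (RingOfIntegers.complexConj_eq_self_iff K x).mp hx
  refine ⟨Algebra.norm ℤ y, ?_⟩
  have hy' : (x : K) = algebraMap (maximalRealSubfield K) K y := hy.symm
  rw [← Int.cast_inj (α := ℚ), Algebra.coe_norm_int, Int.cast_pow, Algebra.coe_norm_int, hy',
    ← Algebra.norm_norm (S := maximalRealSubfield K), Algebra.norm_algebraMap,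
    Algebra.IsQuadraticExtension.finrank_eq_two, map_pow]

end IsCMField

end NumberField

theorem statement0_general (r : ℕ) (hr : 2 < r) (P : Polynomial ℤ)
    (D : ℕ) (hD : D = ∑ i ∈ P.support, (P.coeff i).natAbs)
    (hreal : (Polynomial.aeval (Complex.exp (2 * Real.pi * Complex.I / r)) P).im = 0)
    (hne : Polynomial.aeval (Complex.exp (2 * Real.pi * Complex.I / r)) P ≠ 0)
    (p : ℕ) [hp : Fact p.Prime] (hpD : (D : ℝ) ^ ((Nat.totient r : ℝ) / 2) < (p : ℝ))
    (hpr : ¬ p ∣ r)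
    (ζ : AlgebraicClosure (ZMod p)) (hζ : IsPrimitiveRoot ζ r) :
    Polynomial.aeval ζ P ≠ 0 := by
  intro hζP
  set μ := Complex.exp (2 * Real.pi * Complex.I / r)
  have : NeZero r := ⟨by omega⟩
  have hμ : IsPrimitiveRoot μ r := Complex.isPrimitiveRoot_exp r (NeZero.ne r)
  let K := ℚ⟮μ⟯
  have : IsCyclotomicExtension {r} ℚ K := hμ.isCyclotomicExtension_intermediateField_adjoin
  have : NumberField K := IsCyclotomicExtension.numberField {r} ℚ K
  have : IsCMField K := IsCyclotomicExtension.Rat.isCMField K ⟨r, Set.mem_singleton r, hr⟩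
  have hζK : IsPrimitiveRoot (AdjoinSimple.gen ℚ μ) r :=
    IsPrimitiveRoot.coe_submonoidClass_iff.mp hμ
  set x : 𝓞 K := aeval hζK.toInteger P
  have hxμ : ((x : K) : ℂ) = aeval μ P := by
    change algebraMap K ℂ (algebraMap (𝓞 K) K x) = _
    rw [← aeval_algebraMap_apply, ← aeval_algebraMap_apply]
    rfl
  obtain ⟨m, hm⟩ := IsCMField.exists_norm_eq_sq <|
    IsCMField.complexConj_eq_self_of_im_eq_zero K.val.toRingHom (hxμ ▸ hreal)
  have hm0 : m ≠ 0 := by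
    rintro rfl
    have hx0 : x = 0 := Algebra.norm_eq_zero_iff.mp (hm.trans (zero_pow two_ne_zero))
    exact hne (by rw [← hxμ, hx0]; rfl)
  have : NeZero (r : AlgebraicClosure (ZMod p)) := NeZero.of_not_dvd _ hpr
  obtain ⟨ψ, hψ⟩ := hζK.exists_algHom_ringOfIntegers (isRoot_cyclotomic_iff.mpr hζ)
  have hpm : (p : ℤ) ∣ m := by
    refine Int.Prime.dvd_pow' hp.out <|
      hm ▸ RingOfIntegers.natCast_dvd_norm_of_map_eq_zero p ψ.toRingHom ?_
    change ψ (aeval _ P) = 0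
    rw [← aeval_algHom_apply, hψ, hζP]
  have hmD : (m : ℝ) ^ 2 ≤ (D : ℝ) ^ (Nat.totient r) := by
    have := RingOfIntegers.abs_norm_aeval_le_of_pow_eq_one
      hζK.toInteger_isPrimitiveRoot.pow_eq_one (NeZero.ne r) P
    rwa [IsCyclotomicExtension.Rat.finrank r K, ← Nat.cast_sum, ← hD, hm, Int.cast_pow,
      abs_of_nonneg (sq_nonneg _)] at this
  exact hpD.not_ge (Int.natCast_le_rpow_half_of_dvd hm0 hpm (Nat.cast_nonneg D) hmD)

/-- **Lemma 4.1.** Let `P ∈ ℤ[x]` have degree at most `r - 1` (`r > 2`), and let `D` be the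
sum of the absolute values of its coefficients. Suppose `P(e^{2πi/r})` is a nonzero real
number. Then for every prime `p > D^{φ(r)/2}` not dividing `r` and every primitive `r`-th
root of unity `ζ` in an algebraic closure of `F_p`, one has `P(ζ) ≠ 0`. -/
theorem statement0 (r : ℕ) (hr : 2 < r) (P : Polynomial ℤ)
    (hdeg : P.natDegree ≤ r - 1)
    (D : ℕ) (hD : D = ∑ i ∈ P.support, (P.coeff i).natAbs)
    (hreal : (Polynomial.aeval (Complex.exp (2 * Real.pi * Complex.I / r)) P).im = 0)
    (hne : Polynomial.aeval (Complex.exp (2 * Real.pi * Complex.I / r)) P ≠ 0)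
    (p : ℕ) [hp : Fact p.Prime] (hpD : (D : ℝ) ^ ((Nat.totient r : ℝ) / 2) < (p : ℝ))
    (hpr : ¬ p ∣ r)
    (ζ : AlgebraicClosure (ZMod p)) (hζ : IsPrimitiveRoot ζ r) :
    Polynomial.aeval ζ P ≠ 0 :=
  statement0_general r hr P D hD hreal hne p (hp := hp) hpD hpr ζ hζ
end

section
/- Let r > 2 and let P be an integer polynomial such that P(e^{2πi/r}) is a nonzero real number. Then the product N = ∏ P(e^{2πil/r}), taken over all l with 1 ≤ l < r/2 and gcd(l, r) = 1, is a nonzero integer. -/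
/-!
Let `ζ = e^{2πi/r}`. As `P(ζ)` is real, `P(ζ⁻¹) = P(conj ζ) = P(ζ)`, and transporting this
identity by the automorphisms of `ℚ(ζ)` gives `P(ξ⁻¹) = P(ξ)` for every primitive `r`-th root
of unity `ξ`. An automorphism sends `ζ` to `ζ^c` with `c` a unit mod `r`, and `l ↦ ±c l` permutes
the set of representatives `1 ≤ l < r/2` of `(ℤ/r)ˣ/{±1}`; by the symmetry just proved it therefore
fixes `N`. So `N` is rational, and being an algebraic integer it lies in `ℤ`. It is nonzero
because every factor is a Galois conjugate of `P(ζ) ≠ 0`.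
-/

open Polynomial

def halfSystem (r : ℕ) : Finset ℕ :=
  (Finset.range r).filter (fun l => 1 ≤ l ∧ 2 * l < r ∧ Nat.gcd l r = 1)

namespace ZMod

variable {r : ℕ}

def halfRep (x : ZMod r) : ℕ := min x.val (-x).val

lemma halfRep_neg (x : ZMod r) : halfRep (-x) = halfRep x := by
  rw [halfRep, halfRep, neg_neg, min_comm]

lemma natCast_halfRep [NeZero r] (x : ZMod r) :
    (halfRep x : ZMod r) = x ∨ (halfRep x : ZMod r) = -x := by
  rcases min_choice x.val (-x).val with h | h <;> rw [halfRep, h, natCast_zmod_val] <;> simp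

lemma halfRep_natCast_of_mem {l : ℕ} (hl : l ∈ halfSystem r) : halfRep (l : ZMod r) = l := by
  simp only [halfSystem, Finset.mem_filter, Finset.mem_range] at hl
  have : NeZero r := ⟨by omega⟩
  have hval : (l : ZMod r).val = l := val_natCast_of_lt hl.1
  have hl₀ : (l : ZMod r) ≠ 0 := by
    intro h
    rw [h, val_zero] at hval
    omega
  rw [halfRep, neg_val, if_neg hl₀, hval]
  omega

lemma halfRep_mem_halfSystem (u : (ZMod r)ˣ) (hr : 2 < r) :
    halfRep (u : ZMod r) ∈ halfSystem r := by
  have : Fact (1 < r) := ⟨by omega⟩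
  have hcop := val_coe_unit_coprime u
  have hnegcop : (-(u : ZMod r)).val.Coprime r := by
    simpa using val_coe_unit_coprime (-u)
  have hneg : (-(u : ZMod r)).val = r - (u : ZMod r).val := by
    rw [neg_val, if_neg u.ne_zero]
  have hlt := val_lt (u : ZMod r)
  have hpos : 0 < (u : ZMod r).val := val_pos.2 u.ne_zero
  -- `2 u = r` would force `u ∣ r`, hence `u = 1` and `r = 2`
  have hhalf : 2 * (u : ZMod r).val ≠ r := by
    intro h
    have := Nat.Coprime.eq_one_of_dvd hcop ⟨2, by omega⟩
    omega
  simp only [halfSystem, Finset.mem_filter, Finset.mem_range, halfRep]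
  rcases min_choice (u : ZMod r).val (-(u : ZMod r)).val with h | h <;> rw [h] <;>
    exact ⟨by omega, by omega, by omega, by assumption⟩

lemma halfRep_unit_mul_mem_halfSystem (c : (ZMod r)ˣ) {l : ℕ} (hl : l ∈ halfSystem r) :
    halfRep ((c : ZMod r) * (l : ZMod r)) ∈ halfSystem r := by
  simp only [halfSystem, Finset.mem_filter, Finset.mem_range] at hl
  simpa using halfRep_mem_halfSystem (c * unitOfCoprime l hl.2.2.2) (by omega)

lemma halfRep_inv_mul_halfRep_mul [NeZero r] (c : (ZMod r)ˣ) (x : ZMod r) :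
    halfRep (((c⁻¹ : (ZMod r)ˣ) : ZMod r) * (halfRep ((c : ZMod r) * x) : ZMod r)) =
      halfRep x := by
  rcases natCast_halfRep ((c : ZMod r) * x) with h | h <;>
    simp only [h, mul_neg, Units.inv_mul_cancel_left, halfRep_neg]

/-- `halfSystem r` is a set of representatives of `(ZMod r)ˣ / {±1}`, so multiplication by a unit
permutes the factors of such a product, `halfRep` undoing the signs. -/
lemma prod_halfSystem_unit_mul {M : Type*} [CommMonoid M] [NeZero r] (F : ZMod r → M)
    (hF : ∀ u : (ZMod r)ˣ, F (-u) = F u) (c : (ZMod r)ˣ) :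
    ∏ l ∈ halfSystem r, F (c * (l : ZMod r)) = ∏ l ∈ halfSystem r, F l := by
  refine Finset.prod_nbij' (fun l => halfRep ((c : ZMod r) * (l : ZMod r)))
    (fun l => halfRep (((c⁻¹ : (ZMod r)ˣ) : ZMod r) * (l : ZMod r)))
    (fun l hl => halfRep_unit_mul_mem_halfSystem c hl)
    (fun l hl => halfRep_unit_mul_mem_halfSystem c⁻¹ hl)
    (fun l hl => by simp only [halfRep_inv_mul_halfRep_mul, halfRep_natCast_of_mem hl])
    (fun l hl => by
      simpa only [inv_inv, halfRep_natCast_of_mem hl] using halfRep_inv_mul_halfRep_mul c⁻¹ l)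
    (fun l hl => ?_)
  simp only [halfSystem, Finset.mem_filter, Finset.mem_range] at hl
  have hu := hF (c * unitOfCoprime l hl.2.2.2)
  simp only [Units.val_mul, coe_unitOfCoprime] at hu
  rcases natCast_halfRep ((c : ZMod r) * (l : ZMod r)) with h | h <;> rw [h]
  exact hu.symm

end ZMod

lemma map_aeval_int {A B F : Type*} [Ring A] [Ring B] [FunLike F A B] [RingHomClass F A B]
    (f : F) (x : A) (P : ℤ[X]) : f (aeval x P) = aeval (f x) P :=
  (aeval_algHom_apply (f : A →+* B).toIntAlgHom x P).symm

lemma IsPrimitiveRoot.pow_val_natCast {M : Type*} [CommMonoid M] {ζ : M} {r : ℕ} [NeZero r]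
    (hζ : IsPrimitiveRoot ζ r) (n : ℕ) : ζ ^ (n : ZMod r).val = ζ ^ n := by
  rw [ZMod.val_natCast, hζ.eq_orderOf, pow_mod_orderOf]

section Galois

variable {K : Type*} [Field K] [CharZero K]

lemma exists_intCast_eq_of_forall_algEquiv_apply_eq [IsGalois ℚ K] [FiniteDimensional ℚ K]
    {x : K} (hx : IsIntegral ℤ x) (hfix : ∀ σ : K ≃ₐ[ℚ] K, σ x = x) : ∃ z : ℤ, (z : K) = x := by
  obtain ⟨q, rfl⟩ := (IsGalois.mem_range_algebraMap_iff_fixed x).2 hfix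
  have hq : IsIntegral ℤ q := (isIntegral_algebraMap_iff (algebraMap ℚ K).injective).1 hx
  obtain ⟨z, rfl⟩ := IsIntegrallyClosed.isIntegral_iff.1 hq
  exact ⟨z, by simp⟩

variable {r : ℕ} [NeZero r] {ζ : K}

lemma IsPrimitiveRoot.exists_algEquiv_apply_eq [Normal ℚ K] (hζ : IsPrimitiveRoot ζ r) {ξ : K}
    (hξ : IsPrimitiveRoot ξ r) : ∃ σ : K ≃ₐ[ℚ] K, σ ζ = ξ :=
  IsConjRoot.exists_algEquiv <|
    (cyclotomic_eq_minpoly_rat hξ (NeZero.pos r)).symm.trans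
      (cyclotomic_eq_minpoly_rat hζ (NeZero.pos r))

lemma IsPrimitiveRoot.aeval_inv_eq [Normal ℚ K] (hζ : IsPrimitiveRoot ζ r) {P : ℤ[X]}
    (hP : aeval ζ⁻¹ P = aeval ζ P) {ξ : K} (hξ : IsPrimitiveRoot ξ r) :
    aeval ξ⁻¹ P = aeval ξ P := by
  obtain ⟨σ, rfl⟩ := hζ.exists_algEquiv_apply_eq hξ
  simpa only [map_aeval_int, map_inv₀] using congrArg σ hP

lemma IsPrimitiveRoot.aeval_ne_zero [Normal ℚ K] (hζ : IsPrimitiveRoot ζ r) {P : ℤ[X]}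
    (hP : aeval ζ P ≠ 0) {ξ : K} (hξ : IsPrimitiveRoot ξ r) : aeval ξ P ≠ 0 := by
  obtain ⟨σ, rfl⟩ := hζ.exists_algEquiv_apply_eq hξ
  rw [← map_aeval_int]
  exact (_root_.map_ne_zero _).2 hP

lemma IsPrimitiveRoot.algEquiv_apply_prod_halfSystem_aeval [Normal ℚ K] (hζ : IsPrimitiveRoot ζ r)
    {P : ℤ[X]} (hP : aeval ζ⁻¹ P = aeval ζ P) (σ : K ≃ₐ[ℚ] K) :
    σ (∏ l ∈ halfSystem r, aeval (ζ ^ l) P) = ∏ l ∈ halfSystem r, aeval (ζ ^ l) P := by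
  let F : ZMod r → K := fun x => aeval (ζ ^ x.val) P
  have hF : ∀ u : (ZMod r)ˣ, F (-u) = F u := by
    intro u
    have hu : IsPrimitiveRoot (ζ ^ (u : ZMod r).val) r :=
      hζ.pow_of_coprime _ (ZMod.val_coe_unit_coprime u)
    have hinv : ζ ^ (-(u : ZMod r)).val = (ζ ^ (u : ZMod r).val)⁻¹ := by
      refine eq_inv_of_mul_eq_one_left ?_
      rw [← pow_add, hζ.pow_eq_one_iff_dvd, ← ZMod.natCast_eq_zero_iff]
      push_cast
      simp only [ZMod.natCast_val, ZMod.cast_id', id, neg_add_cancel]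
    simp only [F, hinv, hζ.aeval_inv_eq hP hu]
  have hσ (l : ℕ) : σ (aeval (ζ ^ l) P) = F (hζ.autToPow ℚ σ * (l : ZMod r)) := by
    rw [map_aeval_int, map_pow, ← hζ.autToPow_spec ℚ σ, ← pow_mul, ← hζ.pow_val_natCast,
      Nat.cast_mul, ZMod.natCast_zmod_val]
  rw [map_prod, Finset.prod_congr rfl (fun l _ => hσ l), ZMod.prod_halfSystem_unit_mul F hF]
  exact Finset.prod_congr rfl fun l _ => by simp only [F, hζ.pow_val_natCast]

lemma IsPrimitiveRoot.exists_intCast_eq_prod_halfSystem_aeval_of_isGalois [IsGalois ℚ K]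
    [FiniteDimensional ℚ K] (hζ : IsPrimitiveRoot ζ r) {P : ℤ[X]}
    (hP : aeval ζ⁻¹ P = aeval ζ P) (hP₀ : aeval ζ P ≠ 0) :
    ∃ N : ℤ, N ≠ 0 ∧ (N : K) = ∏ l ∈ halfSystem r, aeval (ζ ^ l) P := by
  have hint : IsIntegral ℤ (∏ l ∈ halfSystem r, aeval (ζ ^ l) P) :=
    IsIntegral.prod _ fun l _ => .of_mem_of_fg _
      ((hζ.isIntegral (NeZero.pos r)).pow l).fg_adjoin_singleton _ (aeval_mem_adjoin_singleton _ _)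
  obtain ⟨N, hN⟩ :=
    exists_intCast_eq_of_forall_algEquiv_apply_eq hint (hζ.algEquiv_apply_prod_halfSystem_aeval hP)
  refine ⟨N, ?_, hN⟩
  rintro rfl
  refine Finset.prod_ne_zero_iff.2 (fun l hl => ?_) (by exact_mod_cast hN.symm)
  simp only [halfSystem, Finset.mem_filter] at hl
  exact hζ.aeval_ne_zero hP₀ (hζ.pow_of_coprime l hl.2.2.2)

end Galois

open IntermediateField in
theorem IsPrimitiveRoot.exists_intCast_eq_prod_halfSystem_aeval {L : Type*} [Field L]
    [CharZero L] {r : ℕ} [NeZero r] {ζ : L} (hζ : IsPrimitiveRoot ζ r) {P : ℤ[X]}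
    (hP : aeval ζ⁻¹ P = aeval ζ P) (hP₀ : aeval ζ P ≠ 0) :
    ∃ N : ℤ, N ≠ 0 ∧ (N : L) = ∏ l ∈ halfSystem r, aeval (ζ ^ l) P := by
  have : IsCyclotomicExtension {r} ℚ ℚ⟮ζ⟯ := by
    change IsCyclotomicExtension {r} ℚ ℚ⟮ζ⟯.toSubalgebra
    rw [adjoin_simple_toSubalgebra_of_isAlgebraic
      (isAlgebraic_iff_isIntegral.2 (hζ.isIntegral (NeZero.pos r)).tower_top)]
    exact hζ.adjoin_isCyclotomicExtension ℚ
  have := IsCyclotomicExtension.isGalois {r} ℚ ℚ⟮ζ⟯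
  have := IsCyclotomicExtension.finiteDimensional {r} ℚ ℚ⟮ζ⟯
  have hgen : IsPrimitiveRoot (AdjoinSimple.gen ℚ ζ) r := coe_submonoidClass_iff.1 hζ
  let φ := algebraMap ℚ⟮ζ⟯ L
  have hφ : φ (AdjoinSimple.gen ℚ ζ) = ζ := AdjoinSimple.algebraMap_gen ℚ ζ
  obtain ⟨N, hN₀, hN⟩ := hgen.exists_intCast_eq_prod_halfSystem_aeval_of_isGalois (P := P)
    (φ.injective (by simpa only [map_aeval_int, map_inv₀, hφ] using hP))
    (fun h => hP₀ (by simpa only [map_aeval_int, hφ, map_zero] using congrArg φ h))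
  refine ⟨N, hN₀, ?_⟩
  simpa only [map_intCast, map_prod, map_aeval_int, map_pow, hφ] using congrArg φ hN

open Complex in
/-- Let `r > 2` and let `P` be an integer polynomial such that `P(e^{2πi/r})` is a nonzero
real number. Then `N = ∏_{1 ≤ l < r/2, gcd(l,r)=1} P(e^{2πil/r})` is a nonzero integer. -/
theorem statement1 (r : ℕ) (hr : 2 < r) (P : Polynomial ℤ)
    (hreal : (Polynomial.aeval (Complex.exp (2 * Real.pi * Complex.I / r)) P).im = 0)
    (hne : Polynomial.aeval (Complex.exp (2 * Real.pi * Complex.I / r)) P ≠ 0) :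
    ∃ N : ℤ, N ≠ 0 ∧
      (N : ℂ) = ∏ l ∈ (Finset.range r).filter (fun l => 1 ≤ l ∧ 2 * l < r ∧ Nat.gcd l r = 1),
        Polynomial.aeval (Complex.exp (2 * Real.pi * Complex.I * l / r)) P := by
  have : NeZero r := ⟨by omega⟩
  have hζ : IsPrimitiveRoot (exp (2 * Real.pi * I / r)) r := isPrimitiveRoot_exp r (NeZero.ne r)
  have hP : aeval (exp (2 * Real.pi * I / r))⁻¹ P = aeval (exp (2 * Real.pi * I / r)) P := by
    rw [inv_eq_conj (hζ.norm'_eq_one (NeZero.ne r)), ← map_aeval_int, conj_eq_iff_im.2 hreal]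
  obtain ⟨N, hN₀, hN⟩ := hζ.exists_intCast_eq_prod_halfSystem_aeval hP hne
  refine ⟨N, hN₀, hN.trans (Finset.prod_congr rfl fun l _ => ?_)⟩
  rw [← exp_nat_mul]
  ring_nf
end

section
/- Let O be a commutative ring, p ∈ O, and let E be the set of pairs (m', Δ') of O-module maps lifting fixed maps modulo p^n on a free O-module. Then the additive group Hom(A⊗A, A) ⊕ Hom(A, A⊗A) (maps over the residue ring) acts freely and transitively on E via (μ, δ) ∘ (m', Δ') = (m' + p^n μ', Δ' + p^n δ'), where μ', δ' are arbitrary lifts of μ, δ. -/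
open TensorProduct

/-!
Everything reduces to coordinates in a basis: over a free module, a map whose values are all
divisible by `r` is `r` times a map (choose the quotients on a basis), and `r • m = 0` holds
exactly when every coordinate of `m` lies in the annihilator of `r`, which for `r = p ^ n` is
`(p)`.
-/

theorem Module.Basis.mem_ideal_smul_top_iff {R M ι : Type*} [CommRing R] [AddCommGroup M]
    [Module R M] (b : Module.Basis ι R M) (I : Ideal R) (m : M) :
    m ∈ I • (⊤ : Submodule R M) ↔ ∀ i, b.repr m i ∈ I := by
  have top : Finsupp.submodule (fun _ : ι ↦ (⊤ : Submodule R R)) = ⊤ := by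
    ext; simp
  have key : (I • ⊤ : Submodule R M).map b.repr.toLinearMap = Finsupp.submodule fun _ ↦ I := by
    rw [Submodule.map_smul'', Submodule.map_top, LinearEquiv.range, ← top,
      ← Finsupp.submodule_smul, smul_eq_mul, Ideal.mul_top]
  rw [← Finsupp.mem_submodule_iff, ← key, Submodule.mem_map_equiv, LinearEquiv.symm_apply_apply]

theorem Module.Basis.smul_eq_zero_iff_mem_ideal_smul_top {R M ι : Type*} [CommRing R]
    [AddCommGroup M] [Module R M] (b : Module.Basis ι R M) {r : R} {I : Ideal R}
    (hI : ∀ x, r * x = 0 ↔ x ∈ I) (m : M) :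
    r • m = 0 ↔ m ∈ I • (⊤ : Submodule R M) := by
  simp_rw [b.mem_ideal_smul_top_iff, ← hI, ← b.repr.map_eq_zero_iff, Finsupp.ext_iff,
    map_smul, Finsupp.smul_apply, smul_eq_mul, Finsupp.zero_apply]

namespace LinearMap

variable {R N M : Type*} [CommRing R] [AddCommGroup N] [Module R N] [AddCommGroup M] [Module R M]

theorem smul_eq_smul_iff_range_sub_le_ideal_smul_top [Module.Free R M] {r : R} {I : Ideal R}
    (hI : ∀ x, r * x = 0 ↔ x ∈ I) (f f' : N →ₗ[R] M) :
    r • f = r • f' ↔ range (f - f') ≤ I • (⊤ : Submodule R M) := by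
  simp_rw [← sub_eq_zero (a := r • f), ← smul_sub, range_le_iff_comap, Submodule.eq_top_iff',
    Submodule.mem_comap, LinearMap.ext_iff, smul_apply, zero_apply,
    (Module.Free.chooseBasis R M).smul_eq_zero_iff_mem_ideal_smul_top hI]

theorem range_smul_le_span_singleton_smul_top (r : R) (g : N →ₗ[R] M) :
    range (r • g) ≤ Ideal.span {r} • (⊤ : Submodule R M) := by
  rintro _ ⟨x, rfl⟩
  exact Submodule.smul_mem_smul (Ideal.mem_span_singleton_self r) trivial

theorem exists_eq_smul_of_range_le_span_singleton_smul_top [Module.Free R N] {r : R}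
    {f : N →ₗ[R] M} (hf : range f ≤ Ideal.span {r} • (⊤ : Submodule R M)) :
    ∃ g : N →ₗ[R] M, f = r • g := by
  let b := Module.Free.chooseBasis R N
  rw [Submodule.ideal_span_singleton_smul] at hf
  have h i : ∃ m, r • m = f (b i) := by
    simpa using (Submodule.mem_smul_pointwise_iff_exists _ _ _).mp (hf (mem_range_self f (b i)))
  choose m hm using h
  exact ⟨b.constr R m, b.ext fun i ↦ by simp [hm]⟩

section Lifts

variable {r : R} {f₀ f f' : N →ₗ[R] M}

theorem range_add_smul_sub_le (hf : range (f - f₀) ≤ Ideal.span {r} • (⊤ : Submodule R M))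
    (g : N →ₗ[R] M) : range (f + r • g - f₀) ≤ Ideal.span {r} • (⊤ : Submodule R M) := by
  rw [add_sub_right_comm]
  exact (range_add_le _ _).trans (sup_le hf (range_smul_le_span_singleton_smul_top r g))

theorem exists_eq_add_smul_of_range_sub_le [Module.Free R N]
    (hf : range (f - f₀) ≤ Ideal.span {r} • (⊤ : Submodule R M))
    (hf' : range (f' - f₀) ≤ Ideal.span {r} • (⊤ : Submodule R M)) :
    ∃ g : N →ₗ[R] M, f' = f + r • g := by
  have hdiff : range (f' - f) ≤ Ideal.span {r} • (⊤ : Submodule R M) := by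
    rintro _ ⟨x, rfl⟩
    rw [← sub_sub_sub_cancel_right f' f f₀]
    exact sub_mem (hf' (mem_range_self _ x)) (hf (mem_range_self _ x))
  obtain ⟨g, hg⟩ := exists_eq_smul_of_range_le_span_singleton_smul_top hdiff
  exact ⟨g, eq_add_of_sub_eq' hg⟩

end Lifts

end LinearMap

theorem pow_mul_eq_zero_iff_mem_span_singleton {R : Type*} [CommRing R] {p : R} {n : ℕ}
    (hpn : p ^ (n + 1) = 0) (hann : ∀ x : R, p ^ n * x = 0 → ∃ y, x = p * y) (x : R) :
    p ^ n * x = 0 ↔ x ∈ Ideal.span {p} := by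
  refine ⟨fun h ↦ Ideal.mem_span_singleton.mpr ?_, fun h ↦ ?_⟩
  · obtain ⟨y, rfl⟩ := hann x h
    exact dvd_mul_right p y
  · obtain ⟨y, rfl⟩ := Ideal.mem_span_singleton.mp h
    rw [← mul_assoc, ← pow_succ, hpn, zero_mul]

/-- (The torsor of extensions in the lifting theorem.)  Let `R` (playing `O/p^{n+1}`) be a
commutative ring with `p^{n+1} = 0` and `ann(p^n) = (p)`, and let `M` (playing `A_{n+1}`) be
a free `R`-module.  Let `E` be the set of pairs `(m', Δ')` of a multiplication and a
comultiplication map on `M` lifting the fixed pair `(m₀, Δ₀)` modulo `p^n`.  Then the group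
`Hom(A ⊗ A, A) ⊕ Hom(A, A ⊗ A)` of maps over the residue ring, realized as pairs `(μ, δ)`
of `R`-module maps taken modulo `p`, acts freely and transitively on `E` by
`(μ, δ) ∘ (m', Δ') = (m' + p^n μ', Δ' + p^n δ')`:  the action preserves `E`, is transitive,
and `p^n μ' = p^n μ''` precisely when `μ', μ''` agree modulo `p` (so the action is
well-defined independently of the lifts and is free). -/
theorem statement18 (R : Type*) [CommRing R] (p : R) (n : ℕ)
    (hpn : p ^ (n + 1) = 0) (hann : ∀ x : R, p ^ n * x = 0 → ∃ y, x = p * y)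
    (M : Type*) [AddCommGroup M] [Module R M] [Module.Free R M]
    (m₀ : M ⊗[R] M →ₗ[R] M) (Δ₀ : M →ₗ[R] M ⊗[R] M)
    (E : Set ((M ⊗[R] M →ₗ[R] M) × (M →ₗ[R] M ⊗[R] M)))
    (hE : E = {e | LinearMap.range (e.1 - m₀) ≤ Ideal.span {p ^ n} • (⊤ : Submodule R M) ∧
      LinearMap.range (e.2 - Δ₀) ≤ Ideal.span {p ^ n} • (⊤ : Submodule R (M ⊗[R] M))}) :
    -- the action maps `E` to `E`
    (∀ e ∈ E, ∀ (μ : M ⊗[R] M →ₗ[R] M) (δ : M →ₗ[R] M ⊗[R] M),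
        (e.1 + p ^ n • μ, e.2 + p ^ n • δ) ∈ E) ∧
    -- the action is transitive
    (∀ e ∈ E, ∀ e' ∈ E, ∃ (μ : M ⊗[R] M →ₗ[R] M) (δ : M →ₗ[R] M ⊗[R] M),
        e'.1 = e.1 + p ^ n • μ ∧ e'.2 = e.2 + p ^ n • δ) ∧
    -- the action is well-defined (independent of the lifts) and free
    (∀ μ μ' : M ⊗[R] M →ₗ[R] M, p ^ n • μ = p ^ n • μ' ↔
        LinearMap.range (μ - μ') ≤ Ideal.span {p} • (⊤ : Submodule R M)) ∧
    (∀ δ δ' : M →ₗ[R] M ⊗[R] M, p ^ n • δ = p ^ n • δ' ↔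
        LinearMap.range (δ - δ') ≤ Ideal.span {p} • (⊤ : Submodule R (M ⊗[R] M))) := by
  subst hE
  have hI := pow_mul_eq_zero_iff_mem_span_singleton hpn hann
  refine ⟨fun e ⟨h₁, h₂⟩ μ δ ↦ ⟨LinearMap.range_add_smul_sub_le h₁ μ,
      LinearMap.range_add_smul_sub_le h₂ δ⟩, fun e ⟨h₁, h₂⟩ e' ⟨h₁', h₂'⟩ ↦ ?_,
    LinearMap.smul_eq_smul_iff_range_sub_le_ideal_smul_top hI,
    LinearMap.smul_eq_smul_iff_range_sub_le_ideal_smul_top hI⟩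
  obtain ⟨μ, hμ⟩ := LinearMap.exists_eq_add_smul_of_range_sub_le h₁ h₁'
  obtain ⟨δ, hδ⟩ := LinearMap.exists_eq_add_smul_of_range_sub_le h₂ h₂'
  exact ⟨μ, δ, hμ, hδ⟩
end
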